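/- Let k ≥ 1 and let μ be a Borel probability measure on ℝ^k whose support is contained in the closed ball of radius R₀ centered at the origin. Then for every τ > 0 and every x ∈ ℝ^k, the operator norm of the Hessian of the log heat-smoothed density is bounded: ‖∇²_x log p_τ(x)‖₂ ≤ 1/τ + R₀²/τ². -/

import Mathlib

open MeasureTheory

noncomputable section

abbrev Euc (k : ℕ) : Type := EuclideanSpace ℝ (Fin k)

/-- The centered Gaussian density on `ℝ^k` with covariance `τ • I`. -/
def gaussDensity (k : ℕ) (τ : ℝ) (z : Euc k) : ℝ :=
  (2 * Real.pi * τ) ^ (-(k : ℝ) / 2) * Real.exp (-‖z‖ ^ 2 / (2 * τ))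

/-- The heat-smoothed density `p_τ(x) = ∫ φ_τ(x - y) dμ(y)`. -/
def heatDensity {k : ℕ} (μ : Measure (Euc k)) (τ : ℝ) (x : Euc k) : ℝ :=
  ∫ y, gaussDensity k τ (x - y) ∂μ

/-- Partial derivative of `f` in the `i`-th coordinate direction. -/
def pderiv' {k : ℕ} (f : Euc k → ℝ) (i : Fin k) (x : Euc k) : ℝ :=
  fderiv ℝ f x (EuclideanSpace.single i 1)

/-- Entry `(i, j)` of the Hessian matrix of `f` at `x`. -/
def hessEntry {k : ℕ} (f : Euc k → ℝ) (i j : Fin k) (x : Euc k) : ℝ :=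
  pderiv' (pderiv' f j) i x

/-- The Laplacian of `f` at `x`. -/
def laplacian' {k : ℕ} (f : Euc k → ℝ) (x : Euc k) : ℝ :=
  ∑ i, hessEntry f i i x

/-- The squared Frobenius norm of the Hessian of `f` at `x`. -/
def hessFrobSq {k : ℕ} (f : Euc k → ℝ) (x : Euc k) : ℝ :=
  ∑ i, ∑ j, hessEntry f i j x ^ 2

/-- The log heat-smoothed density. -/
def logHeat {k : ℕ} (μ : Measure (Euc k)) (τ : ℝ) (x : Euc k) : ℝ :=
  Real.log (heatDensity μ τ x)

/-- The Fisher Information `I^{(k)}(μ_τ) = ∫ p_τ ‖∇ log p_τ‖²`. -/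
def FisherInfo {k : ℕ} (μ : Measure (Euc k)) (τ : ℝ) : ℝ :=
  ∫ x, heatDensity μ τ x * ‖gradient (logHeat μ τ) x‖ ^ 2

/-- The Fisher Information Rate `R^{(k)}(μ_τ) = ∫ p_τ ‖∇² log p_τ‖_F²`. -/
def FisherInfoRate {k : ℕ} (μ : Measure (Euc k)) (τ : ℝ) : ℝ :=
  ∫ x, heatDensity μ τ x * hessFrobSq (logHeat μ τ) x

/-- The posterior mean `m_τ(x)` of a clean sample given noisy observation `x`. -/
def postMean {k : ℕ} (μ : Measure (Euc k)) (τ : ℝ) (x : Euc k) : Euc k :=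
  (heatDensity μ τ x)⁻¹ • ∫ y, gaussDensity k τ (x - y) • y ∂μ

/-- The Hessian matrix of `f` at `x`. -/
def hessMatrix {k : ℕ} (f : Euc k → ℝ) (x : Euc k) : Matrix (Fin k) (Fin k) ℝ :=
  fun i j => hessEntry f i j x

/-!
Differentiating twice under the integral, `∇² log p_τ(x) = τ⁻² Cov(x - Y) - τ⁻¹ I`, where `Y`
follows the posterior `μ` tilted by `y ↦ φ_τ(x - y)`. The posterior is carried by the ball of
radius `R₀`, and the variance of a random vector about its mean is at most its second moment
about any point, so the covariance term has operator norm at most `R₀²`. Compactness of the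
support of `μ` also supplies the domination needed to differentiate under the integral.
-/

section BoundedSupport

variable {X G : Type*} [TopologicalSpace X] [MeasurableSpace X] [OpensMeasurableSpace X]
  [NormedAddCommGroup G] {μ : Measure X} [IsFiniteMeasure μ] {K : Set X}

theorem Continuous.integrable_of_ae_mem [T2Space X] {f : X → G} (hf : Continuous f)
    (hK : IsCompact K) (hμK : ∀ᵐ y ∂μ, y ∈ K) : Integrable f μ := by
  rw [← Measure.restrict_eq_self_of_ae_mem hμK]
  exact hf.continuousOn.integrableOn_compact hK

theorem Continuous.memLp_of_ae_mem [SecondCountableTopologyEither X G] {f : X → G}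
    (hf : Continuous f) (hK : IsCompact K) (hμK : ∀ᵐ y ∂μ, y ∈ K) (p : ENNReal) :
    MemLp f p μ := by
  obtain ⟨C, hC⟩ := hK.exists_bound_of_continuousOn hf.continuousOn
  exact .of_bound hf.aestronglyMeasurable C (by filter_upwards [hμK] with y hy using hC y hy)

end BoundedSupport

theorem hasFDerivAt_integral_comp_sub {E G : Type*} [NormedAddCommGroup E] [NormedSpace ℝ E]
    [MeasurableSpace E] [BorelSpace E] [ProperSpace E] [NormedAddCommGroup G] [NormedSpace ℝ G]
    [CompleteSpace G] {μ : Measure E} [IsFiniteMeasure μ] {K : Set E} (hK : IsCompact K)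
    (hμK : ∀ᵐ y ∂μ, y ∈ K) {g : E → G} (hg : ContDiff ℝ 1 g) (x : E) :
    HasFDerivAt (fun x ↦ ∫ y, g (x - y) ∂μ) (∫ y, fderiv ℝ g (x - y) ∂μ) x := by
  have h_sub (x : E) : Continuous fun y : E ↦ x - y := continuous_const.sub continuous_id
  have hg' : Continuous (fderiv ℝ g) := hg.continuous_fderiv one_ne_zero
  obtain ⟨C, hC⟩ := (((isCompact_closedBall x 1).prod hK).image continuous_sub)
    |>.exists_bound_of_continuousOn hg'.continuousOn
  refine hasFDerivAt_integral_of_dominated_of_fderiv_le (F := fun x y ↦ g (x - y))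
    (F' := fun x y ↦ fderiv ℝ g (x - y)) (bound := fun _ ↦ C) (Metric.ball_mem_nhds x one_pos)
    (.of_forall fun x' ↦ (hg.continuous.comp (h_sub x')).aestronglyMeasurable)
    ((hg.continuous.comp (h_sub x)).integrable_of_ae_mem hK hμK)
    (hg'.comp (h_sub x)).aestronglyMeasurable ?_ (integrable_const C) ?_
  · filter_upwards [hμK] with y hy x' hx'
    exact hC _ ⟨(x', y), ⟨Metric.ball_subset_closedBall hx', hy⟩, rfl⟩
  · filter_upwards with y x' _
    simpa [Function.comp_def] using
      (hg.differentiable one_ne_zero (x' - y)).hasFDerivAt.comp x'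
        ((hasFDerivAt_id x').sub_const y)

section Covariance
open ProbabilityTheory RealInnerProductSpace

variable {Ω E : Type*} [MeasurableSpace Ω] [NormedAddCommGroup E] [InnerProductSpace ℝ E]
  [CompleteSpace E] {π : Measure Ω} [IsProbabilityMeasure π] {Z : Ω → E} {c : E} {R : ℝ}

theorem integral_norm_sub_integral_sq_le (hZ : MemLp Z 2 π) (hR : ∀ᵐ ω ∂π, ‖Z ω - c‖ ≤ R) :
    ∫ ω, ‖Z ω - ∫ ω', Z ω' ∂π‖ ^ 2 ∂π ≤ R ^ 2 := by
  set m := ∫ ω, Z ω ∂π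
  have hZm : MemLp (fun ω ↦ Z ω - m) 2 π := hZ.sub (memLp_const m)
  have h_sq : Integrable (fun ω ↦ ‖Z ω - m‖ ^ 2) π := hZm.integrable_norm_pow two_ne_zero
  have h_inner : Integrable (fun ω ↦ 2 * ⟪Z ω - m, m - c⟫) π :=
    ((hZm.integrable one_le_two).inner_const (m - c)).const_mul 2
  have h_centered : ∫ ω, ⟪Z ω - m, m - c⟫ ∂π = 0 := by
    simp_rw [real_inner_comm (m - c)]
    rw [integral_inner (hZm.integrable one_le_two),
      integral_sub (hZ.integrable one_le_two) (integrable_const m)]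
    simp [m]
  calc ∫ ω, ‖Z ω - m‖ ^ 2 ∂π = ∫ ω, (‖Z ω - m‖ ^ 2 + 2 * ⟪Z ω - m, m - c⟫) ∂π := by
        rw [integral_add h_sq h_inner, integral_const_mul, h_centered, mul_zero, add_zero]
    _ ≤ ∫ _, R ^ 2 ∂π := by
        refine integral_mono_ae (h_sq.add h_inner) (integrable_const _) ?_
        filter_upwards [hR] with ω hω
        have h_split := norm_add_sq_real (Z ω - m) (m - c)
        rw [sub_add_sub_cancel] at h_split
        nlinarith [sq_nonneg ‖m - c‖, norm_nonneg (Z ω - c)]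
    _ = R ^ 2 := by simp

theorem abs_covariance_inner_le (hZ : MemLp Z 2 π) (hR : ∀ᵐ ω ∂π, ‖Z ω - c‖ ≤ R) (v w : E) :
    |cov[fun ω ↦ ⟪Z ω, v⟫, fun ω ↦ ⟪Z ω, w⟫; π]| ≤ R ^ 2 * (‖v‖ * ‖w‖) := by
  set m := ∫ ω, Z ω ∂π
  have h_mean (u : E) : ∫ ω, ⟪Z ω, u⟫ ∂π = ⟪m, u⟫ := by
    simp_rw [real_inner_comm u]
    exact integral_inner (hZ.integrable one_le_two) u
  have h_sq : Integrable (fun ω ↦ ‖Z ω - m‖ ^ 2) π :=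
    (hZ.sub (memLp_const m)).integrable_norm_pow two_ne_zero
  calc |cov[fun ω ↦ ⟪Z ω, v⟫, fun ω ↦ ⟪Z ω, w⟫; π]|
      = ‖∫ ω, ⟪Z ω - m, v⟫ * ⟪Z ω - m, w⟫ ∂π‖ := by
        simp [covariance, h_mean, inner_sub_left]
    _ ≤ ∫ ω, ‖Z ω - m‖ ^ 2 * (‖v‖ * ‖w‖) ∂π := by
        refine norm_integral_le_of_norm_le (h_sq.mul_const _) (.of_forall fun ω ↦ ?_)
        rw [norm_mul]
        calc ‖⟪Z ω - m, v⟫‖ * ‖⟪Z ω - m, w⟫‖ ≤ (‖Z ω - m‖ * ‖v‖) * (‖Z ω - m‖ * ‖w‖) :=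
              mul_le_mul (norm_inner_le_norm _ _) (norm_inner_le_norm _ _) (norm_nonneg _)
                (by positivity)
          _ = ‖Z ω - m‖ ^ 2 * (‖v‖ * ‖w‖) := by ring
    _ ≤ R ^ 2 * (‖v‖ * ‖w‖) := by
        rw [integral_mul_const]
        gcongr
        exact integral_norm_sub_integral_sq_le hZ hR

end Covariance

theorem hasFDerivAt_fderiv_log {E : Type*} [NormedAddCommGroup E] [NormedSpace ℝ E]
    {f : E → ℝ} {f' : E → E →L[ℝ] ℝ} {f'' : E →L[ℝ] E →L[ℝ] ℝ} {x : E}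
    (hf : ∀ y, HasFDerivAt f (f' y) y) (hf₀ : ∀ y, f y ≠ 0) (hf' : HasFDerivAt f' f'' x) :
    HasFDerivAt (fderiv ℝ fun y ↦ Real.log (f y))
      ((f x)⁻¹ • f'' - (f x ^ 2)⁻¹ • (f' x).smulRight (f' x)) x := by
  have h_log : fderiv ℝ (fun y ↦ Real.log (f y)) = fun y ↦ (f y)⁻¹ • f' y :=
    funext fun y ↦ ((hf y).log (hf₀ y)).fderiv
  rw [h_log]
  refine (((hasDerivAt_inv (hf₀ x)).comp_hasFDerivAt x (hf x)).smul hf').congr_fderiv ?_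
  ext v w
  simp only [Function.comp_apply, neg_smul, add_apply, smul_apply,
    ContinuousLinearMap.smulRight_apply, neg_apply, smul_eq_mul, sub_apply]
  ring

theorem norm_toEuclideanCLM_le_of_apply_single {ι : Type*} [Fintype ι] [DecidableEq ι]
    {M : Matrix ι ι ℝ} {L : EuclideanSpace ℝ ι →L[ℝ] EuclideanSpace ℝ ι →L[ℝ] ℝ}
    (hM : ∀ i j, M i j = L (EuclideanSpace.single i 1) (EuclideanSpace.single j 1)) :
    ‖Matrix.toEuclideanCLM (𝕜 := ℝ) M‖ ≤ ‖L‖ := by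
  refine ContinuousLinearMap.opNorm_le_bound _ (norm_nonneg L) fun v ↦ ?_
  set u := Matrix.toEuclideanCLM (𝕜 := ℝ) M v
  have h_expand (ℓ : EuclideanSpace ℝ ι →L[ℝ] ℝ) (w : EuclideanSpace ℝ ι) :
      ℓ w = ∑ j, w j * ℓ (EuclideanSpace.single j 1) := by
    conv_lhs => rw [← (EuclideanSpace.basisFun ι ℝ).sum_repr w]
    simp [map_sum]
  have hu_apply (i : ι) : u i = L (EuclideanSpace.single i 1) v := by
    simp [u, Matrix.mulVec, dotProduct, hM, h_expand (L _) v, mul_comm]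
  have hu : ‖u‖ * ‖u‖ = L u v := by
    rw [← sq, EuclideanSpace.real_norm_sq_eq, ← L.flip_apply, h_expand (L.flip v) u]
    simp [hu_apply, sq]
  have h_le : ‖u‖ * ‖u‖ ≤ ‖L‖ * ‖v‖ * ‖u‖ := by
    rw [hu]
    exact (le_abs_self _).trans ((L.le_opNorm₂ u v).trans_eq (by ring))
  rcases (norm_nonneg u).eq_or_lt with hu0 | hu0
  · rw [← hu0]; positivity
  · exact le_of_mul_le_mul_right h_le hu0

theorem hessEntry_eq_of_hasFDerivAt_fderiv {k : ℕ} {f : Euc k → ℝ} {x : Euc k}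
    {L : Euc k →L[ℝ] Euc k →L[ℝ] ℝ} (hL : HasFDerivAt (fderiv ℝ f) L x) (i j : Fin k) :
    hessEntry f i j x = L (EuclideanSpace.single i 1) (EuclideanSpace.single j 1) := by
  have h := hL.clm_apply (hasFDerivAt_const (EuclideanSpace.single j (1 : ℝ)) x)
  change fderiv ℝ (fun y ↦ fderiv ℝ f y (EuclideanSpace.single j 1)) x _ = _
  rw [h.fderiv]
  simp

theorem norm_toEuclideanCLM_hessMatrix_le {k : ℕ} {f : Euc k → ℝ} {x : Euc k}
    {L : Euc k →L[ℝ] Euc k →L[ℝ] ℝ} (hL : HasFDerivAt (fderiv ℝ f) L x) :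
    ‖Matrix.toEuclideanCLM (𝕜 := ℝ) (n := Fin k) (hessMatrix f x)‖ ≤ ‖L‖ :=
  norm_toEuclideanCLM_le_of_apply_single (hessEntry_eq_of_hasFDerivAt_fderiv hL)

section Gaussian
open RealInnerProductSpace

variable {k : ℕ} {τ : ℝ}

lemma gaussDensity_pos (hτ : 0 < τ) (z : Euc k) : 0 < gaussDensity k τ z := by
  unfold gaussDensity
  have := Real.pi_pos
  positivity

lemma contDiff_gaussDensity : ContDiff ℝ ⊤ (gaussDensity k τ) :=
  contDiff_const.mul ((contDiff_norm_sq ℝ).neg.div_const _).exp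

lemma hasFDerivAt_gaussDensity (z : Euc k) :
    HasFDerivAt (gaussDensity k τ) ((-τ⁻¹ * gaussDensity k τ z) • innerSL ℝ z) z := by
  have h := (((hasFDerivAt_id z).norm_sq.neg.mul_const (2 * τ)⁻¹).exp).const_mul
    ((2 * Real.pi * τ) ^ (-(k : ℝ) / 2))
  have h_eq : gaussDensity k τ =
      fun z ↦ (2 * Real.pi * τ) ^ (-(k : ℝ) / 2) * Real.exp (-‖z‖ ^ 2 * (2 * τ)⁻¹) := by
    funext z
    simp [gaussDensity, div_eq_mul_inv]
  rw [h_eq]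
  refine h.congr_fderiv ?_
  ext v
  simp only [neg_mul, id_eq, Pi.neg_apply, mul_inv_rev, ContinuousLinearMap.comp_id, smul_neg,
    neg_apply, smul_apply, coe_innerSL_apply, nsmul_eq_mul, Nat.cast_ofNat, smul_eq_mul]
  ring

lemma fderiv_gaussDensity :
    fderiv ℝ (gaussDensity k τ) = fun z ↦ (-τ⁻¹ * gaussDensity k τ z) • innerSL ℝ z :=
  funext fun z ↦ (hasFDerivAt_gaussDensity z).fderiv

lemma fderiv_gaussDensity_apply (z v : Euc k) :
    fderiv ℝ (gaussDensity k τ) z v = -τ⁻¹ * gaussDensity k τ z * ⟪z, v⟫ := by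
  simp [fderiv_gaussDensity]

lemma fderiv_fderiv_gaussDensity_apply (z v w : Euc k) :
    fderiv ℝ (fderiv ℝ (gaussDensity k τ)) z v w =
      gaussDensity k τ z * (τ⁻¹ ^ 2 * (⟪z, v⟫ * ⟪z, w⟫) - τ⁻¹ * ⟪v, w⟫) := by
  -- `innerSL ℝ` is stated as conjugate-linear; over `ℝ` it is linear by `rfl`.
  have h : HasFDerivAt (fun z ↦ (-τ⁻¹ * gaussDensity k τ z) • innerSL ℝ z) _ z :=
    ((hasFDerivAt_gaussDensity z).const_mul (-τ⁻¹)).smul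
      (ContinuousLinearMap.hasFDerivAt (𝕜 := ℝ) (f := innerSL ℝ) (x := z))
  have h_inner : (innerSL ℝ : Euc k →L[ℝ] Euc k →L[ℝ] ℝ) v w = ⟪v, w⟫ := rfl
  rw [fderiv_gaussDensity, h.fderiv]
  simp only [add_apply, smul_apply, ContinuousLinearMap.smulRight_apply, coe_innerSL_apply,
    smul_eq_mul, h_inner]
  ring

end Gaussian

/-- The law of the clean sample `y ∼ μ` given the observation `x = y + √τ · N(0, I)`. -/
def gaussPosterior {k : ℕ} (μ : Measure (Euc k)) (τ : ℝ) (x : Euc k) : Measure (Euc k) :=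
  μ.tilted fun y ↦ Real.log (gaussDensity k τ (x - y))

section HeatDensity
open Metric ProbabilityTheory RealInnerProductSpace

variable {k : ℕ} {μ : Measure (Euc k)} {τ R₀ : ℝ}

lemma ae_mem_closedBall_gaussPosterior (hμ : ∀ᵐ y ∂μ, y ∈ closedBall 0 R₀) (x : Euc k) :
    ∀ᵐ y ∂gaussPosterior μ τ x, y ∈ closedBall 0 R₀ :=
  (tilted_absolutelyContinuous μ _).ae_le hμ

variable [IsProbabilityMeasure μ]

lemma integrable_gaussDensity_sub (hμ : ∀ᵐ y ∂μ, y ∈ closedBall 0 R₀) (x : Euc k) :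
    Integrable (fun y ↦ gaussDensity k τ (x - y)) μ :=
  (contDiff_gaussDensity.continuous.comp (continuous_const.sub continuous_id)).integrable_of_ae_mem
    (isCompact_closedBall 0 R₀) hμ

lemma heatDensity_pos (hτ : 0 < τ) (hμ : ∀ᵐ y ∂μ, y ∈ closedBall 0 R₀) (x : Euc k) :
    0 < heatDensity μ τ x := by
  unfold heatDensity
  simpa [Real.exp_log (gaussDensity_pos hτ _)] using
    integral_exp_pos (f := fun y ↦ Real.log (gaussDensity k τ (x - y)))
      (by simpa [Real.exp_log (gaussDensity_pos hτ _)] using integrable_gaussDensity_sub hμ x)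

lemma isProbabilityMeasure_gaussPosterior (hτ : 0 < τ) (hμ : ∀ᵐ y ∂μ, y ∈ closedBall 0 R₀)
    (x : Euc k) : IsProbabilityMeasure (gaussPosterior μ τ x) :=
  isProbabilityMeasure_tilted
    (by simpa [Real.exp_log (gaussDensity_pos hτ _)] using integrable_gaussDensity_sub hμ x)

lemma integral_gaussDensity_mul (hτ : 0 < τ) (hμ : ∀ᵐ y ∂μ, y ∈ closedBall 0 R₀)
    (x : Euc k) (g : Euc k → ℝ) :
    ∫ y, gaussDensity k τ (x - y) * g y ∂μ =
      heatDensity μ τ x * ∫ y, g y ∂gaussPosterior μ τ x := by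
  rw [gaussPosterior, integral_tilted]
  simp only [Real.exp_log (gaussDensity_pos hτ _), smul_eq_mul]
  rw [← integral_const_mul]
  refine integral_congr_ae (.of_forall fun y ↦ ?_)
  have := (heatDensity_pos hτ hμ x).ne'
  simp only [heatDensity] at this ⊢
  field_simp

lemma integral_fderiv_gaussDensity_apply (hτ : 0 < τ) (hμ : ∀ᵐ y ∂μ, y ∈ closedBall 0 R₀)
    (x v : Euc k) :
    (∫ y, fderiv ℝ (gaussDensity k τ) (x - y) ∂μ) v =
      -τ⁻¹ * heatDensity μ τ x * ∫ y, ⟪x - y, v⟫ ∂gaussPosterior μ τ x := by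
  have h_int : Integrable (fun y ↦ fderiv ℝ (gaussDensity k τ) (x - y)) μ :=
    ((contDiff_gaussDensity.continuous_fderiv (by simp)).comp
      (continuous_const.sub continuous_id)).integrable_of_ae_mem (isCompact_closedBall 0 R₀) hμ
  rw [ContinuousLinearMap.integral_apply h_int]
  simp_rw [fderiv_gaussDensity_apply, mul_assoc]
  rw [integral_const_mul, integral_gaussDensity_mul hτ hμ]

lemma integral_fderiv_fderiv_gaussDensity_apply (hτ : 0 < τ)
    (hμ : ∀ᵐ y ∂μ, y ∈ closedBall 0 R₀) (x v w : Euc k) :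
    (∫ y, fderiv ℝ (fderiv ℝ (gaussDensity k τ)) (x - y) ∂μ) v w =
      heatDensity μ τ x *
        (τ⁻¹ ^ 2 * (∫ y, ⟪x - y, v⟫ * ⟪x - y, w⟫ ∂gaussPosterior μ τ x) - τ⁻¹ * ⟪v, w⟫) := by
  have h_cont : Continuous fun y ↦ fderiv ℝ (fderiv ℝ (gaussDensity k τ)) (x - y) :=
    ((contDiff_gaussDensity.fderiv_right (m := 1) le_top).continuous_fderiv one_ne_zero).comp
      (continuous_const.sub continuous_id)
  have := isProbabilityMeasure_gaussPosterior hτ hμ x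
  have h_int : Integrable (fun y ↦ ⟪x - y, v⟫ * ⟪x - y, w⟫) (gaussPosterior μ τ x) :=
    (by fun_prop : Continuous fun y : Euc k ↦ ⟪x - y, v⟫ * ⟪x - y, w⟫).integrable_of_ae_mem
      (isCompact_closedBall 0 R₀) (ae_mem_closedBall_gaussPosterior hμ x)
  rw [ContinuousLinearMap.integral_apply
      (h_cont.integrable_of_ae_mem (isCompact_closedBall 0 R₀) hμ),
    ContinuousLinearMap.integral_apply
      ((h_cont.clm_apply continuous_const).integrable_of_ae_mem (isCompact_closedBall 0 R₀) hμ)]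
  simp_rw [fderiv_fderiv_gaussDensity_apply]
  rw [integral_gaussDensity_mul hτ hμ, integral_sub (h_int.const_mul _) (integrable_const _),
    integral_const_mul, integral_const, probReal_univ, one_smul]

lemma hasFDerivAt_fderiv_logHeat (hτ : 0 < τ) (hμ : ∀ᵐ y ∂μ, y ∈ closedBall 0 R₀) (x : Euc k) :
    HasFDerivAt (fderiv ℝ (logHeat μ τ))
      ((heatDensity μ τ x)⁻¹ • (∫ y, fderiv ℝ (fderiv ℝ (gaussDensity k τ)) (x - y) ∂μ) -
        (heatDensity μ τ x ^ 2)⁻¹ • (∫ y, fderiv ℝ (gaussDensity k τ) (x - y) ∂μ).smulRight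
          (∫ y, fderiv ℝ (gaussDensity k τ) (x - y) ∂μ)) x := by
  have h_heat (x : Euc k) : HasFDerivAt (heatDensity μ τ)
      (∫ y, fderiv ℝ (gaussDensity k τ) (x - y) ∂μ) x :=
    hasFDerivAt_integral_comp_sub (isCompact_closedBall 0 R₀) hμ
      (contDiff_gaussDensity.of_le le_top) x
  have h_grad := hasFDerivAt_integral_comp_sub (μ := μ) (isCompact_closedBall 0 R₀) hμ
    (contDiff_gaussDensity.fderiv_right (m := 1) (f := gaussDensity k τ) le_top) x
  -- Elaborated without the expected type: unifying with it unfolds `logHeat` too eagerly.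
  exact (hasFDerivAt_fderiv_log h_heat (fun x ↦ (heatDensity_pos hτ hμ x).ne') h_grad :)

theorem fderiv_fderiv_logHeat_apply (hτ : 0 < τ) (hμ : ∀ᵐ y ∂μ, y ∈ closedBall 0 R₀)
    (x v w : Euc k) :
    fderiv ℝ (fderiv ℝ (logHeat μ τ)) x v w =
      τ⁻¹ ^ 2 * cov[fun y ↦ ⟪x - y, v⟫, fun y ↦ ⟪x - y, w⟫; gaussPosterior μ τ x] -
        τ⁻¹ * ⟪v, w⟫ := by
  have := isProbabilityMeasure_gaussPosterior hτ hμ x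
  have h_memLp (u : Euc k) : MemLp (fun y ↦ ⟪x - y, u⟫) 2 (gaussPosterior μ τ x) :=
    (by fun_prop : Continuous fun y : Euc k ↦ ⟪x - y, u⟫).memLp_of_ae_mem
      (isCompact_closedBall 0 R₀) (ae_mem_closedBall_gaussPosterior hμ x) 2
  have hp := (heatDensity_pos hτ hμ x).ne'
  rw [(hasFDerivAt_fderiv_logHeat hτ hμ x).fderiv, covariance_eq_sub (h_memLp v) (h_memLp w)]
  simp only [sub_apply, smul_apply, ContinuousLinearMap.smulRight_apply, Pi.mul_apply,
    integral_fderiv_gaussDensity_apply hτ hμ, integral_fderiv_fderiv_gaussDensity_apply hτ hμ,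
    smul_eq_mul]
  field_simp
  ring

theorem norm_fderiv_fderiv_logHeat_le (hτ : 0 < τ) (hμ : ∀ᵐ y ∂μ, y ∈ closedBall 0 R₀)
    (x : Euc k) : ‖fderiv ℝ (fderiv ℝ (logHeat μ τ)) x‖ ≤ 1 / τ + R₀ ^ 2 / τ ^ 2 := by
  have := isProbabilityMeasure_gaussPosterior hτ hμ x
  have h_noise : ∀ᵐ y ∂gaussPosterior μ τ x, ‖(x - y) - x‖ ≤ R₀ := by
    filter_upwards [ae_mem_closedBall_gaussPosterior hμ x] with y hy
    simpa using hy
  have h_memLp : MemLp (fun y ↦ x - y) 2 (gaussPosterior μ τ x) :=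
    (continuous_const.sub continuous_id).memLp_of_ae_mem (isCompact_closedBall 0 R₀)
      (ae_mem_closedBall_gaussPosterior hμ x) 2
  refine ContinuousLinearMap.opNorm_le_bound₂ _ (by positivity) fun v w ↦ ?_
  have h_cov := abs_covariance_inner_le h_memLp h_noise v w
  rw [fderiv_fderiv_logHeat_apply hτ hμ, Real.norm_eq_abs]
  calc _ ≤ τ⁻¹ ^ 2 * |cov[fun y ↦ ⟪x - y, v⟫, fun y ↦ ⟪x - y, w⟫; gaussPosterior μ τ x]| +
        τ⁻¹ * |⟪v, w⟫| := by
        refine (abs_sub _ _).trans_eq ?_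
        rw [abs_mul, abs_mul, abs_of_pos (pow_pos (inv_pos.2 hτ) 2), abs_of_pos (inv_pos.2 hτ)]
    _ ≤ τ⁻¹ ^ 2 * (R₀ ^ 2 * (‖v‖ * ‖w‖)) + τ⁻¹ * (‖v‖ * ‖w‖) := by
        gcongr
        exact abs_real_inner_le_norm v w
    _ = (1 / τ + R₀ ^ 2 / τ ^ 2) * ‖v‖ * ‖w‖ := by
        field_simp
        ring

end HeatDensity

theorem hessian_log_density_opNorm_bound_general
    (k : ℕ) (μ : Measure (Euc k)) [IsProbabilityMeasure μ]
    (R₀ : ℝ) (hsupp : μ (Metric.closedBall (0 : Euc k) R₀)ᶜ = 0)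
    (τ : ℝ) (hτ : 0 < τ) (x : Euc k) :
    ‖Matrix.toEuclideanCLM (𝕜 := ℝ) (n := Fin k) (hessMatrix (logHeat μ τ) x)‖ ≤
      1 / τ + R₀ ^ 2 / τ ^ 2 := by
  have hμ : ∀ᵐ y ∂μ, y ∈ Metric.closedBall (0 : Euc k) R₀ := mem_ae_iff.2 hsupp
  have h_hess := (hasFDerivAt_fderiv_logHeat hτ hμ x).differentiableAt.hasFDerivAt
  exact (norm_toEuclideanCLM_hessMatrix_le h_hess).trans (norm_fderiv_fderiv_logHeat_le hτ hμ x)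

/-- for a measure supported in the closed ball of radius `R₀`, the operator
(spectral) norm of the Hessian of the log heat-smoothed density is bounded by
`1/τ + R₀²/τ²`. -/
theorem hessian_log_density_opNorm_bound
    (k : ℕ) (hk : 1 ≤ k) (μ : Measure (Euc k)) [IsProbabilityMeasure μ]
    (R₀ : ℝ) (hsupp : μ (Metric.closedBall (0 : Euc k) R₀)ᶜ = 0)
    (τ : ℝ) (hτ : 0 < τ) (x : Euc k) :
    ‖Matrix.toEuclideanCLM (𝕜 := ℝ) (n := Fin k) (hessMatrix (logHeat μ τ) x)‖ ≤
      1 / τ + R₀ ^ 2 / τ ^ 2 :=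
  hessian_log_density_opNorm_bound_general k μ R₀ hsupp τ hτ x
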